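/- Let (X,d) be a metric space and T : X → X a generalized quasi-contraction with constant q ∈ [0,1). Then for every x ∈ X and all natural numbers n, m with 1 ≤ n < m, d(Tⁿx, Tᵐx) ≤ (qⁿ / (1 − q)) · d(x, Tx). In particular, the sequence (Tⁿx)_{n∈ℕ} is a Cauchy sequence in X. -/

import Mathlib

/-!
Let `D(x, n)` be the diameter of the orbit segment `{x, Tx, …, Tⁿx}`. Every distance between two
points `Tⁱx, Tʲx` with `1 ≤ i < j ≤ n` is the distance of the images of `Tⁱ⁻¹x, Tʲ⁻¹x`, and all nine
distances in the contraction condition are again distances within the segment, so it is at most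
`q · D(x, n)`. Together with the triangle inequality through `Tx` this gives
`D(x, n) ≤ d(x, Tx) + q · D(x, n)`, i.e. `D(x, n) ≤ d(x, Tx) / (1 - q)`. Shifting the segment by one
step gains a factor `q`, so `D(Tᵏx, n) ≤ qᵏ · D(x, n + k)`, and `d(Tⁿx, Tᵐx) ≤ D(Tⁿx, m - n)`.
-/

open Metric

section

variable {X : Type*}

def iterateSegment (T : X → X) (x : X) (n : ℕ) : Set X :=
  (fun k => T^[k] x) '' Set.Iic n

variable [PseudoMetricSpace X]

def IsGeneralizedQuasiContraction (T : X → X) (q : ℝ) : Prop :=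
  ∀ x y : X, dist (T x) (T y) ≤ q * (max (dist x y) (max (dist x (T x)) (max (dist y (T y))
    (max (dist x (T y)) (max (dist y (T x)) (max (dist (T (T x)) x) (max (dist (T (T x)) (T x))
    (max (dist (T (T x)) y) (dist (T (T x)) (T y))))))))))

variable {T : X → X} {q : ℝ} {x : X}

lemma dist_iterate_le_diam_iterateSegment {k l n : ℕ} (hk : k ≤ n) (hl : l ≤ n) :
    dist (T^[k] x) (T^[l] x) ≤ diam (iterateSegment T x n) :=
  dist_le_diam_of_mem ((Set.finite_Iic n).image _).isBounded ⟨k, hk, rfl⟩ ⟨l, hl, rfl⟩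

namespace IsGeneralizedQuasiContraction

variable (hT : IsGeneralizedQuasiContraction T q) (hq : 0 ≤ q)
include hT hq

lemma dist_iterate_le_of_lt {i j n : ℕ} (hi : 1 ≤ i) (hij : i < j) (hj : j ≤ n) :
    dist (T^[i] x) (T^[j] x) ≤ q * diam (iterateSegment T x n) := by
  obtain ⟨a, rfl⟩ : ∃ a, i = a + 1 := ⟨i - 1, by omega⟩
  obtain ⟨b, rfl⟩ : ∃ b, j = b + 1 := ⟨j - 1, by omega⟩
  simp only [Function.iterate_succ_apply']
  refine (hT _ _).trans (mul_le_mul_of_nonneg_left ?_ hq)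
  simp only [← Function.iterate_succ_apply' T, max_le_iff]
  refine ⟨?_, ?_, ?_, ?_, ?_, ?_, ?_, ?_, ?_⟩ <;>
    exact dist_iterate_le_diam_iterateSegment (by omega) (by omega)

lemma dist_iterate_le {i j n : ℕ} (hi : 1 ≤ i) (hj : 1 ≤ j) (hin : i ≤ n) (hjn : j ≤ n) :
    dist (T^[i] x) (T^[j] x) ≤ q * diam (iterateSegment T x n) := by
  rcases lt_trichotomy i j with hij | rfl | hji
  · exact hT.dist_iterate_le_of_lt hq hi hij hjn
  · simpa using mul_nonneg hq diam_nonneg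
  · rw [dist_comm]
    exact hT.dist_iterate_le_of_lt hq hj hji hin

lemma dist_self_iterate_le {j n : ℕ} (hj : j ≤ n) :
    dist x (T^[j] x) ≤ dist x (T x) + q * diam (iterateSegment T x n) := by
  rcases Nat.eq_zero_or_pos j with rfl | hj0
  · simpa using add_nonneg dist_nonneg (mul_nonneg hq diam_nonneg)
  · calc dist x (T^[j] x) ≤ dist x (T^[1] x) + dist (T^[1] x) (T^[j] x) := dist_triangle _ _ _
      _ ≤ dist x (T x) + q * diam (iterateSegment T x n) := by
        rw [Function.iterate_one]
        gcongr
        simpa using hT.dist_iterate_le hq le_rfl hj0 (by omega) hj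

lemma diam_iterateSegment_le_dist_add (n : ℕ) :
    diam (iterateSegment T x n) ≤ dist x (T x) + q * diam (iterateSegment T x n) := by
  refine diam_le_of_forall_dist_le (add_nonneg dist_nonneg (mul_nonneg hq diam_nonneg)) ?_
  rintro _ ⟨i, hi, rfl⟩ _ ⟨j, hj, rfl⟩
  rcases Nat.eq_zero_or_pos i with rfl | hi0
  · simpa using hT.dist_self_iterate_le hq hj
  rcases Nat.eq_zero_or_pos j with rfl | hj0
  · simpa [dist_comm] using hT.dist_self_iterate_le hq hi
  exact (hT.dist_iterate_le hq hi0 hj0 hi hj).trans (le_add_of_nonneg_left dist_nonneg)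

lemma diam_iterateSegment_le (hq1 : q < 1) (n : ℕ) :
    diam (iterateSegment T x n) ≤ dist x (T x) / (1 - q) := by
  rw [le_div_iff₀ (by linarith)]
  linarith [hT.diam_iterateSegment_le_dist_add hq (x := x) n]

lemma diam_iterateSegment_apply_le (n : ℕ) :
    diam (iterateSegment T (T x) n) ≤ q * diam (iterateSegment T x (n + 1)) := by
  refine diam_le_of_forall_dist_le (mul_nonneg hq diam_nonneg) ?_
  rintro _ ⟨i, hi, rfl⟩ _ ⟨j, hj, rfl⟩
  simp only [Set.mem_Iic] at hi hj
  simp only [← Function.iterate_succ_apply]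
  exact hT.dist_iterate_le hq (by omega) (by omega) (by omega) (by omega)

lemma diam_iterateSegment_iterate_le (k n : ℕ) :
    diam (iterateSegment T (T^[k] x) n) ≤ q ^ k * diam (iterateSegment T x (n + k)) := by
  induction k generalizing n with
  | zero => simp
  | succ k ih =>
    calc diam (iterateSegment T (T^[k + 1] x) n)
        ≤ q * diam (iterateSegment T (T^[k] x) (n + 1)) := by
          rw [Function.iterate_succ_apply']
          exact hT.diam_iterateSegment_apply_le hq n
      _ ≤ q * (q ^ k * diam (iterateSegment T x (n + 1 + k))) := by gcongr; exact ih _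
      _ = q ^ (k + 1) * diam (iterateSegment T x (n + (k + 1))) := by ring_nf

lemma dist_iterate_iterate_le (hq1 : q < 1) {n m : ℕ} (hnm : n ≤ m) :
    dist (T^[n] x) (T^[m] x) ≤ q ^ n / (1 - q) * dist x (T x) :=
  calc dist (T^[n] x) (T^[m] x) = dist (T^[0] (T^[n] x)) (T^[m - n] (T^[n] x)) := by
        rw [Function.iterate_zero_apply, ← Function.iterate_add_apply, Nat.sub_add_cancel hnm]
    _ ≤ diam (iterateSegment T (T^[n] x) (m - n)) :=
        dist_iterate_le_diam_iterateSegment (Nat.zero_le _) le_rfl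
    _ ≤ q ^ n * diam (iterateSegment T x (m - n + n)) := hT.diam_iterateSegment_iterate_le hq n _
    _ ≤ q ^ n * (dist x (T x) / (1 - q)) := by
        gcongr
        exact hT.diam_iterateSegment_le hq hq1 _
    _ = q ^ n / (1 - q) * dist x (T x) := by ring

end IsGeneralizedQuasiContraction

end

/-- For a generalized quasi-contraction, `d(Tⁿx, Tᵐx) ≤ qⁿ/(1-q)·d(x,Tx)`
whenever `1 ≤ n < m`; in particular the Picard iterates form a Cauchy sequence. -/
theorem stmt4 {X : Type*} [MetricSpace X] (T : X → X) (q : ℝ) (hq0 : 0 ≤ q) (hq1 : q < 1)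
    (hT : ∀ x y : X, dist (T x) (T y) ≤ q * (max (dist x y) (max (dist x (T x)) (max (dist y (T y)) (max (dist x (T y)) (max (dist y (T x)) (max (dist (T (T x)) x) (max (dist (T (T x)) (T x)) (max (dist (T (T x)) y) (dist (T (T x)) (T y)))))))))))
    : (∀ (x : X) (n m : ℕ), 1 ≤ n → n < m →
        dist (T^[n] x) (T^[m] x) ≤ q ^ n / (1 - q) * dist x (T x)) ∧
      ∀ x : X, CauchySeq (fun n : ℕ => T^[n] x) := by
  have hT' : IsGeneralizedQuasiContraction T q := hT
  refine ⟨fun x n m _ hnm => hT'.dist_iterate_iterate_le hq0 hq1 hnm.le, fun x => ?_⟩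
  refine cauchySeq_of_le_geometric q (dist x (T x) / (1 - q)) hq1 fun n => ?_
  exact (hT'.dist_iterate_iterate_le hq0 hq1 n.le_succ).trans_eq (by ring)
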